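/- Let s = 0 < t be integers (a vertex of type 12^0). Let M be the matrix with rows (1, 0, 0), (0, 1, 0), (y, z, 1), where y ∈ 𝒫/𝒫^{t} and z ∈ 𝒫/𝒫^{t-s}. Then M represents a γ-fixed point at the vertex (s,t) if and only if v(z) ≥ t − s − n and v(y) ≥ t − m. -/

import Mathlib

noncomputable section

/-- The element π of F = K((π)). -/
def pp (K : Type*) [Field K] : LaurentSeries K := HahnSeries.single (1 : ℤ) (1 : K)

/-- The π-adic valuation on F = K((π)), with v(0) = ⊤. -/
def vv {K : Type*} [Field K] (x : LaurentSeries K) : WithTop ℤ := x.orderTop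

/-- x ∈ 𝒫^r, i.e. v(x) ≥ r. -/
def inP {K : Type*} [Field K] (r : ℤ) (x : LaurentSeries K) : Prop := (r : WithTop ℤ) ≤ vv x

/-- x ∈ 𝒫^r/𝒫^{r'} : x is a polynomial x_r π^r + ⋯ + x_{r'-1} π^{r'-1} (possibly 0). -/
def inPQ {K : Type*} [Field K] (r r' : ℤ) (x : LaurentSeries K) : Prop :=
  inP r x ∧ ∀ i : ℤ, r' ≤ i → x.coeff i = 0

/-- Membership in GL₃(𝒪): entries in 𝒪 and determinant a unit of 𝒪. -/
def inGLO {K : Type*} [Field K] (C : Matrix (Fin 3) (Fin 3) (LaurentSeries K)) : Prop :=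
  (∀ i j, inP 0 (C i j)) ∧ vv C.det = 0

/-- The matrix x_{(s,t)} = diag(1, π^s, π^t). -/
def xst (K : Type*) [Field K] (s t : ℤ) : Matrix (Fin 3) (Fin 3) (LaurentSeries K) :=
  Matrix.diagonal ![1, pp K ^ s, pp K ^ t]

/-- Membership in the subgroup I^a of GL₃(F). -/
def inIa {K : Type*} [Field K] (a : ℤ) (g : Matrix (Fin 3) (Fin 3) (LaurentSeries K)) : Prop :=
  g.det ≠ 0 ∧
  vv (g 0 0) = 0 ∧ vv (g 1 1) = 0 ∧ vv (g 2 2) = 0 ∧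
  inP (-a) (g 0 1) ∧ inP (-a) (g 0 2) ∧ inP 0 (g 1 2) ∧
  inP (a + 1) (g 1 0) ∧ inP (a + 1) (g 2 0) ∧ inP 1 (g 2 1)

/-- Membership in x_{(s,t)}·GL₃(𝒪)·x_{(s,t)}⁻¹. -/
def inConj {K : Type*} [Field K] (s t : ℤ) (g : Matrix (Fin 3) (Fin 3) (LaurentSeries K)) : Prop :=
  ∃ C, inGLO C ∧ g = xst K s t * C * (xst K s t)⁻¹

/-- M represents a γ-fixed point at the vertex (s,t): there is C ∈ GL₃(𝒪) with
γ·M·x_{(s,t)} = M·x_{(s,t)}·C. -/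
def reprFixed {K : Type*} [Field K] (γ M : Matrix (Fin 3) (Fin 3) (LaurentSeries K))
    (s t : ℤ) : Prop :=
  ∃ C, inGLO C ∧ γ * (M * xst K s t) = M * xst K s t * C

/-!
Write `g = M · x_{(s,t)}`, which is invertible. The fixed-point condition `γ g = g C` forces
`C = g⁻¹ γ g`, and this conjugate is lower triangular with diagonal `u₁, u₂, u₃` and bottom row
`π^{-t} (u₃ - u₁) y, π^{s-t} (u₃ - u₂) z, u₃`. It lies in `GL₃(𝒪)` exactly when the two
off-diagonal entries are integral, and since `v(u₃ - u₁) = m` and `v(u₃ - u₂) = n` this says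
`v(y) ≥ t - m` and `v(z) ≥ t - s - n`.
-/

theorem exists_and_mul_eq_mul_iff {ι R : Type*} [Fintype ι] [DecidableEq ι] [CommRing R]
    {γ g C₀ : Matrix ι ι R} (hg : IsUnit g.det) (hC₀ : γ * g = g * C₀)
    (P : Matrix ι ι R → Prop) : (∃ C, P C ∧ γ * g = g * C) ↔ P C₀ := by
  have hg' : IsUnit g := (Matrix.isUnit_iff_isUnit_det g).mpr hg
  refine ⟨fun ⟨C, hC, hγ⟩ => ?_, fun h => ⟨C₀, h, hC₀⟩⟩
  rwa [hg'.mul_left_cancel (hC₀.symm.trans hγ)]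

theorem WithTop.coe_le_coe_add_iff {a b : ℤ} {x : WithTop ℤ} :
    (b : WithTop ℤ) ≤ a + x ↔ ((b - a : ℤ) : WithTop ℤ) ≤ x := by
  cases x with
  | top => simp
  | coe x => norm_cast; omega

section Valuation

variable {K : Type*} [Field K]

theorem vv_mul (a b : LaurentSeries K) : vv (a * b) = vv a + vv b :=
  HahnSeries.orderTop_mul a b

theorem vv_pp_zpow (k : ℤ) : vv (pp K ^ k) = k := by
  rw [pp, ← RatFunc.single_zpow, vv, HahnSeries.orderTop_single one_ne_zero]

theorem pp_ne_zero : pp K ≠ 0 :=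
  HahnSeries.single_ne_zero one_ne_zero

theorem pp_zpow_ne_zero (k : ℤ) : pp K ^ k ≠ 0 :=
  zpow_ne_zero k pp_ne_zero

theorem ne_zero_of_vv_eq_zero {x : LaurentSeries K} (hx : vv x = 0) : x ≠ 0 := by
  rintro rfl
  simp [vv] at hx

theorem vv_sub_of_vv_one_sub_div {u a : LaurentSeries K} {k : ℤ} (hu : vv u = 0)
    (h : vv (1 - a / u) = k) : vv (u - a) = k := by
  have hu₀ := ne_zero_of_vv_eq_zero hu
  rw [show u - a = u * (1 - a / u) by field_simp, vv_mul, hu, h, zero_add]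

theorem inP_mul_iff {a x : LaurentSeries K} {k : ℤ} (ha : vv a = k) (r : ℤ) :
    inP r (a * x) ↔ inP (r - k) x := by
  rw [inP, vv_mul, ha, WithTop.coe_le_coe_add_iff, inP]

theorem inP_zero_of_vv_eq_zero {x : LaurentSeries K} (hx : vv x = 0) : inP 0 x :=
  hx.ge

theorem inP_zero_zero : inP 0 (0 : LaurentSeries K) := by
  simp [inP, vv]

theorem inGLO_lowerTriangular_iff {a b c d e : LaurentSeries K}
    (ha : vv a = 0) (hb : vv b = 0) (he : vv e = 0) :
    inGLO !![a, 0, 0; 0, b, 0; c, d, e] ↔ inP 0 c ∧ inP 0 d := by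
  refine ⟨fun ⟨hC, _⟩ => ⟨hC 2 0, hC 2 1⟩, fun ⟨hc, hd⟩ => ⟨?_, ?_⟩⟩
  · intro i j
    fin_cases i <;> fin_cases j <;>
      simp [inP_zero_of_vv_eq_zero, inP_zero_zero, ha, hb, he, hc, hd]
  · rw [Matrix.det_fin_three]
    simp [vv_mul, ha, hb, he]

end Valuation

theorem stmt13_general (K : Type*) [Field K]
    (u₁ u₂ u₃ : LaurentSeries K) (m n : ℤ)
    (hu₁ : vv u₁ = 0) (hu₂ : vv u₂ = 0) (hu₃ : vv u₃ = 0)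
    (hv₁₃ : vv (1 - u₁ / u₃) = (m : WithTop ℤ))
    (hv₂₃ : vv (1 - u₂ / u₃) = (n : WithTop ℤ))
    (s t : ℤ)
    (y z : LaurentSeries K) :
    reprFixed (Matrix.diagonal ![u₁, u₂, u₃]) !![1, 0, 0; 0, 1, 0; y, z, 1] s t ↔
      (((t - s - n : ℤ) : WithTop ℤ) ≤ vv z ∧ ((t - m : ℤ) : WithTop ℤ) ≤ vv y) := by
  set M : Matrix (Fin 3) (Fin 3) (LaurentSeries K) := !![1, 0, 0; 0, 1, 0; y, z, 1]
  have hdet : IsUnit (M * xst K s t).det := by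
    rw [Matrix.det_mul, xst, Matrix.det_diagonal, Matrix.det_fin_three]
    simp [Fin.prod_univ_three, pp_zpow_ne_zero, M]
  have hconj : Matrix.diagonal ![u₁, u₂, u₃] * (M * xst K s t) = M * xst K s t *
      !![u₁, 0, 0; 0, u₂, 0;
        pp K ^ (-t) * ((u₃ - u₁) * y), pp K ^ (s - t) * ((u₃ - u₂) * z), u₃] := by
    have hπ : pp K ^ t ≠ 0 := pp_zpow_ne_zero t
    simp only [M, xst, Matrix.diagonal_vec3, Matrix.mul_fin_three, zpow_neg, zpow_sub₀ pp_ne_zero]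
    refine Matrix.ext fun i j => ?_
    fin_cases i <;> fin_cases j <;> simp <;> field_simp <;> ring
  rw [reprFixed, exists_and_mul_eq_mul_iff hdet hconj, inGLO_lowerTriangular_iff hu₁ hu₂ hu₃,
    inP_mul_iff (vv_pp_zpow _), inP_mul_iff (vv_sub_of_vv_one_sub_div hu₃ hv₁₃),
    inP_mul_iff (vv_pp_zpow _), inP_mul_iff (vv_sub_of_vv_one_sub_div hu₃ hv₂₃), and_comm]
  simp only [inP, show 0 - -t - m = t - m by ring, show 0 - (s - t) - n = t - s - n by ring]

theorem stmt13 (K : Type*) [Field K]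
    (u₁ u₂ u₃ : LaurentSeries K) (m n : ℤ)
    (hu₁ : vv u₁ = 0) (hu₂ : vv u₂ = 0) (hu₃ : vv u₃ = 0)
    (h₁₂ : u₁ ≠ u₂) (h₁₃ : u₁ ≠ u₃) (h₂₃ : u₂ ≠ u₃)
    (hm : 0 ≤ m) (hmn : m ≤ n)
    (hv₁₂ : vv (1 - u₁ / u₂) = (m : WithTop ℤ))
    (hv₁₃ : vv (1 - u₁ / u₃) = (m : WithTop ℤ))
    (hv₂₃ : vv (1 - u₂ / u₃) = (n : WithTop ℤ))
    (s t : ℤ) (hs : s = 0) (hst : 0 < t)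
    (y z : LaurentSeries K) (hy : inPQ 1 t y) (hz : inPQ 1 (t - s) z) :
    reprFixed (Matrix.diagonal ![u₁, u₂, u₃]) !![1, 0, 0; 0, 1, 0; y, z, 1] s t ↔
      (((t - s - n : ℤ) : WithTop ℤ) ≤ vv z ∧ ((t - m : ℤ) : WithTop ℤ) ≤ vv y) :=
  stmt13_general K u₁ u₂ u₃ m n hu₁ hu₂ hu₃ hv₁₃ hv₂₃ s t y z
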